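/- arXiv:1602.07830 — 2 statements merged into one kernel-verified Lean document; each statement's English description precedes it below -/
import Mathlib

section
/- Let δ ∈ (0,1/2) and A(y) = y·log|y| on ℝ (with A(0)=0). Define T_A f(x) = ∫₀¹ (A(x) − A(y) − A′(y)(x − y))/(x − y)² · y^(δ−1) dy for x ∈ (0,1), where f(y) = y^(δ−1) χ_{(0,1)}(y). Then for every x ∈ (0,1), |T_A f(x)| ≥ (1/2) δ⁻² x^(δ−1). -/
/-!
For `x, y > 0` the numerator of the kernel is `x log (x / y) - (x - y)`, the Bregman divergence
of `y log y`, which lies between `0` and `(x - y)² / y`. Hence the integrand is nonnegative, and it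
is integrable: it is at most `(4 / x) y^(δ-1) log (x / y)` for `y ≤ x / 2` and at most `y^(δ-2)`
beyond. Discarding `y > x` and using `(x - y)² ≤ x²` for `y ≤ x`, the kernel is at least
`(log (x / y) - 1) / x`, and `∫₀ˣ (log (x / y) - 1) y^(δ-1) dy = x^δ (δ⁻² - δ⁻¹)`, which is at
least `x^δ δ⁻² / 2` when `δ ≤ 1 / 2`.
-/

open MeasureTheory Set

/-- `A(y) = y log |y|` (with `A 0 = 0` since `Real.log 0 = 0`). -/
noncomputable def Afun (y : ℝ) : ℝ := y * Real.log |y|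

/-- `A'(y) = 1 + log |y|` for `y ≠ 0`. -/
noncomputable def Afun' (y : ℝ) : ℝ := 1 + Real.log |y|

/-- The commutator-type operator applied to `f(y) = y^(δ-1) χ_(0,1)(y)`. -/
noncomputable def TAf (δ x : ℝ) : ℝ :=
  ∫ y in Set.Ioo (0:ℝ) 1,
    ((Afun x - Afun y - Afun' y * (x - y)) / (x - y) ^ 2) * y ^ (δ - 1)

open Real

noncomputable def entropyKernel (x y : ℝ) : ℝ :=
  (x * log (x / y) - (x - y)) / (x - y) ^ 2

section entropyKernel

variable {x y : ℝ}

lemma Afun_bregman_eq (hx : 0 < x) (hy : 0 < y) :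
    Afun x - Afun y - Afun' y * (x - y) = x * log (x / y) - (x - y) := by
  rw [Afun, Afun, Afun', abs_of_pos hx, abs_of_pos hy, log_div hx.ne' hy.ne']
  ring

lemma sub_le_mul_log_div (hx : 0 < x) (hy : 0 < y) : x - y ≤ x * log (x / y) := by
  have h := one_sub_inv_le_log_of_pos (div_pos hx hy)
  rw [inv_div] at h
  calc x - y = x * (1 - y / x) := by field_simp
    _ ≤ x * log (x / y) := by gcongr

lemma mul_log_div_sub_le (hx : 0 < x) (hy : 0 < y) :
    x * log (x / y) - (x - y) ≤ (x - y) ^ 2 / y := by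
  have h := log_le_sub_one_of_pos (div_pos hx hy)
  calc x * log (x / y) - (x - y) ≤ x * (x / y - 1) - (x - y) := by gcongr
    _ = (x - y) ^ 2 / y := by field_simp

lemma entropyKernel_nonneg (hx : 0 < x) (hy : 0 < y) : 0 ≤ entropyKernel x y :=
  div_nonneg (sub_nonneg.2 (sub_le_mul_log_div hx hy)) (sq_nonneg _)

lemma entropyKernel_le_inv (hx : 0 < x) (hy : 0 < y) : entropyKernel x y ≤ y⁻¹ := by
  rcases eq_or_ne x y with rfl | hxy
  · simp [entropyKernel, hy.le]
  · rw [entropyKernel, div_le_iff₀ (pow_two_pos_of_ne_zero (sub_ne_zero.2 hxy))]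
    exact (mul_log_div_sub_le hx hy).trans_eq (div_eq_inv_mul _ _)

lemma entropyKernel_le_log (hx : 0 < x) (hy : 0 < y) (hyx : y ≤ x / 2) :
    entropyKernel x y ≤ 4 / x * log (x / y) := by
  have hsq : x ^ 2 / 4 ≤ (x - y) ^ 2 := by nlinarith
  have hlog : 0 ≤ log (x / y) := log_nonneg ((one_le_div hy).2 (by linarith))
  rw [entropyKernel, div_le_iff₀ (lt_of_lt_of_le (by positivity) hsq)]
  calc x * log (x / y) - (x - y) ≤ 4 / x * log (x / y) * (x ^ 2 / 4) := by
        field_simp; nlinarith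
    _ ≤ 4 / x * log (x / y) * (x - y) ^ 2 := by gcongr

lemma log_div_sub_one_div_le_entropyKernel (hy : 0 < y) (hyx : y ≤ x) :
    (log (x / y) - 1) / x ≤ entropyKernel x y := by
  have hx := hy.trans_le hyx
  rcases hyx.eq_or_lt with rfl | hyx
  · simp [entropyKernel, neg_div, hy.le]
  have hN := sub_le_mul_log_div hx hy
  calc (log (x / y) - 1) / x ≤ (x * log (x / y) - (x - y)) / x ^ 2 := by
        rw [div_le_div_iff₀ hx (pow_pos hx 2)]; nlinarith
    _ ≤ entropyKernel x y :=
        div_le_div_of_nonneg_left (by linarith) (pow_pos (sub_pos.2 hyx) 2) (by nlinarith)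

end entropyKernel

-- Written as a function of `u = y ^ δ`, so that continuity at `0` reduces to that of `u log u`.
noncomputable def rpowLogPrimitive (δ x y : ℝ) : ℝ :=
  (y ^ δ * log (x ^ δ) - y ^ δ * log (y ^ δ) + y ^ δ) / δ ^ 2

section rpowLog

variable {δ x : ℝ}

lemma continuous_rpowLogPrimitive (hδ : 0 ≤ δ) : Continuous (rpowLogPrimitive δ x) := by
  have hpow := continuous_rpow_const hδ
  exact (((hpow.mul continuous_const).sub (continuous_mul_log.comp hpow)).add hpow).div_const _

lemma hasDerivAt_rpowLogPrimitive (hδ : δ ≠ 0) (hx : 0 < x) {y : ℝ} (hy : 0 < y) :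
    HasDerivAt (rpowLogPrimitive δ x) (y ^ (δ - 1) * log (x / y)) y := by
  have hpow := hasDerivAt_rpow_const (x := y) (p := δ) (Or.inl hy.ne')
  have hmulLog := (hasDerivAt_mul_log (rpow_pos_of_pos hy δ).ne').comp y hpow
  refine ((((hpow.mul_const (log (x ^ δ))).sub hmulLog).add hpow).div_const (δ ^ 2)).congr_deriv ?_
  rw [log_rpow hx, log_rpow hy, log_div hx.ne' hy.ne']
  field_simp
  ring

lemma integrableOn_rpow_mul_log_div (hδ : 0 < δ) (hx : 0 < x) :
    IntegrableOn (fun y => y ^ (δ - 1) * log (x / y)) (Ioc 0 x) :=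
  intervalIntegral.integrableOn_deriv_of_nonneg (continuous_rpowLogPrimitive hδ.le).continuousOn
    (fun _ hy => hasDerivAt_rpowLogPrimitive hδ.ne' hx hy.1)
    (fun _ hy => mul_nonneg (rpow_nonneg hy.1.le _) (log_nonneg ((one_le_div hy.1).2 hy.2.le)))

lemma integral_rpow_mul_log_div (hδ : 0 < δ) (hx : 0 < x) :
    ∫ y in (0)..x, y ^ (δ - 1) * log (x / y) = x ^ δ / δ ^ 2 := by
  rw [intervalIntegral.integral_eq_sub_of_hasDerivAt_of_le hx.le
    (continuous_rpowLogPrimitive hδ.le).continuousOn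
    (fun _ hy => hasDerivAt_rpowLogPrimitive hδ.ne' hx hy.1)
    ((intervalIntegrable_iff_integrableOn_Ioc_of_le hx.le).2 (integrableOn_rpow_mul_log_div hδ hx))]
  simp [rpowLogPrimitive, zero_rpow hδ.ne']

end rpowLog

lemma TAf_eq_integral_entropyKernel {δ x : ℝ} (hx : 0 < x) :
    TAf δ x = ∫ y in Ioo 0 1, entropyKernel x y * y ^ (δ - 1) :=
  setIntegral_congr_fun measurableSet_Ioo fun y hy => by
    rw [entropyKernel, Afun_bregman_eq hx hy.1]

lemma integrableOn_entropyKernel_mul_rpow {δ x : ℝ} (hδ : 0 < δ) (hx : 0 < x) (b : ℝ) :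
    IntegrableOn (fun y => entropyKernel x y * y ^ (δ - 1)) (Ioc 0 b) := by
  have hmeas : AEStronglyMeasurable (fun y => entropyKernel x y * y ^ (δ - 1)) := by
    unfold entropyKernel; fun_prop
  have hnorm : ∀ y, 0 < y → ‖entropyKernel x y * y ^ (δ - 1)‖ = entropyKernel x y * y ^ (δ - 1) :=
    fun y hy => norm_of_nonneg (mul_nonneg (entropyKernel_nonneg hx hy) (rpow_nonneg hy.le _))
  have hsplit : Ioc 0 b ⊆ Ioc 0 (x / 2) ∪ Icc (x / 2) b := fun y hy =>
    (le_or_gt y (x / 2)).imp (fun h => ⟨hy.1, h⟩) (fun h => ⟨h.le, hy.2⟩)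
  refine IntegrableOn.mono_set (IntegrableOn.union ?_ ?_) hsplit
  · refine Integrable.mono' (((integrableOn_rpow_mul_log_div hδ hx).mono_set
      (Ioc_subset_Ioc_right (by linarith))).const_mul (4 / x)) hmeas.restrict ?_
    filter_upwards [ae_restrict_mem measurableSet_Ioc] with y hy
    rw [hnorm y hy.1]
    calc entropyKernel x y * y ^ (δ - 1) ≤ 4 / x * log (x / y) * y ^ (δ - 1) :=
          mul_le_mul_of_nonneg_right (entropyKernel_le_log hx hy.1 hy.2) (rpow_nonneg hy.1.le _)
      _ = 4 / x * (y ^ (δ - 1) * log (x / y)) := by ring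
  · have hpos : ∀ y ∈ Icc (x / 2) b, 0 < y := fun y hy => by linarith [hy.1]
    have hcont : ContinuousOn (fun y => y⁻¹ * y ^ (δ - 1)) (Icc (x / 2) b) :=
      (continuousOn_inv₀.mono fun y hy => (hpos y hy).ne').mul
        (continuousOn_id.rpow_const fun y hy => Or.inl (hpos y hy).ne')
    refine Integrable.mono' hcont.integrableOn_Icc hmeas.restrict ?_
    filter_upwards [ae_restrict_mem measurableSet_Icc] with y hy
    rw [hnorm y (hpos y hy)]
    exact mul_le_mul_of_nonneg_right (entropyKernel_le_inv hx (hpos y hy))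
      (rpow_nonneg (hpos y hy).le _)

lemma le_setIntegral_entropyKernel_mul_rpow {δ x : ℝ} (hδ : 0 < δ) (hx : 0 < x) :
    x ^ (δ - 1) * (δ⁻¹ ^ 2 - δ⁻¹) ≤ ∫ y in Ioc 0 x, entropyKernel x y * y ^ (δ - 1) := by
  have hpow : IntervalIntegrable (fun y : ℝ => y ^ (δ - 1)) volume 0 x :=
    intervalIntegral.intervalIntegrable_rpow' (by linarith)
  have hlog := integrableOn_rpow_mul_log_div hδ hx
  have hlower : ∫ y in Ioc 0 x, (y ^ (δ - 1) * log (x / y) - y ^ (δ - 1)) / x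
      = x ^ (δ - 1) * (δ⁻¹ ^ 2 - δ⁻¹) := by
    rw [← intervalIntegral.integral_of_le hx.le, intervalIntegral.integral_div,
      intervalIntegral.integral_sub ((intervalIntegrable_iff_integrableOn_Ioc_of_le hx.le).2 hlog)
        hpow,
      integral_rpow_mul_log_div hδ hx, integral_rpow (Or.inl (by linarith)),
      sub_add_cancel, zero_rpow hδ.ne', rpow_sub_one hx.ne']
    field_simp
    ring
  rw [← hlower]
  refine setIntegral_mono_on ((hlog.sub hpow.1).div_const x)
    (integrableOn_entropyKernel_mul_rpow hδ hx x) measurableSet_Ioc fun y hy => ?_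
  calc (y ^ (δ - 1) * log (x / y) - y ^ (δ - 1)) / x
      = (log (x / y) - 1) / x * y ^ (δ - 1) := by ring
    _ ≤ entropyKernel x y * y ^ (δ - 1) := mul_le_mul_of_nonneg_right
        (log_div_sub_one_div_le_entropyKernel hy.1 hy.2) (rpow_nonneg hy.1.le _)

theorem TA_lower_bound (δ : ℝ) (hδ : δ ∈ Set.Ioo (0:ℝ) (1/2))
    (x : ℝ) (hx : x ∈ Set.Ioo (0:ℝ) 1) :
    (1/2) * δ⁻¹ ^ 2 * x ^ (δ - 1) ≤ |TAf δ x| := by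
  obtain ⟨hδ0, hδ2⟩ := hδ
  obtain ⟨hx0, hx1⟩ := hx
  have hδinv : 2 ≤ δ⁻¹ := by rw [le_inv_comm₀ two_pos hδ0]; linarith
  calc (1/2) * δ⁻¹ ^ 2 * x ^ (δ - 1) ≤ x ^ (δ - 1) * (δ⁻¹ ^ 2 - δ⁻¹) := by
        rw [mul_comm]
        exact mul_le_mul_of_nonneg_left (by nlinarith) (rpow_nonneg hx0.le _)
    _ ≤ ∫ y in Ioc 0 x, entropyKernel x y * y ^ (δ - 1) :=
        le_setIntegral_entropyKernel_mul_rpow hδ0 hx0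
    _ ≤ ∫ y in Ioc 0 1, entropyKernel x y * y ^ (δ - 1) :=
        setIntegral_mono_set (integrableOn_entropyKernel_mul_rpow hδ0 hx0 1)
          (ae_restrict_of_forall_mem measurableSet_Ioc fun y hy =>
            mul_nonneg (entropyKernel_nonneg hx0 hy.1) (rpow_nonneg hy.1.le _))
          (Ioc_subset_Ioc_right hx1.le).eventuallyLE
    _ = TAf δ x := by rw [integral_Ioc_eq_integral_Ioo, TAf_eq_integral_entropyKernel hx0]
    _ ≤ |TAf δ x| := le_abs_self _
end

section
/- Let p ∈ (1,∞) and δ ∈ (0, 1/2), and let w(x) = |x|^{(p−1)(1−δ)} on ℝ. Then w ∈ A_p(ℝ) and there exist constants c(p), C(p) > 0 with c(p) δ^{−(p−1)} ≤ [w]_{A_p} ≤ C(p) δ^{−(p−1)}. -/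
open MeasureTheory Set

/-! Split intervals `(a, b]` (after reflecting, `a + b ≥ 0`) by their position relative to the
origin. If `b ≤ 2a` the weight is nearly constant on the interval and the `A_p` product is at
most `2^{p-1}`, since `w(t) (w(t)^{-1/(p-1)})^{p-1} = 1`. Otherwise `(a, b] ⊆ (-b, b]` has length
at least `b / 2`, and the exact integrals `∫_{-b}^{b} |x|^r = 2 b^{r+1}/(r+1)` bound the product
by `4^p δ^{-(p-1)}`; the loss `δ^{-(p-1)}` comes from `1/(r+1)` at `r = δ - 1`. On `(0, 1]` the
same integrals give the product exactly, `((p-1)(1-δ)+1)⁻¹ δ^{-(p-1)} ≥ p⁻¹ δ^{-(p-1)}`. -/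

/-- The `A_p` expression of the weight `w(x) = |x|^((p-1)(1-δ))` on the interval
`(a, b]`: `(⟨w⟩_I)(⟨w^{-1/(p-1)}⟩_I)^{p-1}`, noting `w^{-1/(p-1)}(x) = |x|^(δ-1)`. -/
noncomputable def apExpr (p δ a b : ℝ) : ℝ :=
  ((b - a)⁻¹ * ∫ x in Set.Ioc a b, |x| ^ ((p - 1) * (1 - δ))) *
    ((b - a)⁻¹ * ∫ x in Set.Ioc a b, |x| ^ (δ - 1)) ^ (p - 1)

lemma intervalIntegrable_abs_rpow {r : ℝ} (hr : -1 < r) (a b : ℝ) :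
    IntervalIntegrable (fun x : ℝ => |x| ^ r) volume a b := by
  have from_zero_of_nonneg {c : ℝ} (hc : 0 ≤ c) :
      IntervalIntegrable (fun x : ℝ => |x| ^ r) volume 0 c := by
    have h := intervalIntegral.intervalIntegrable_rpow' (a := 0) (b := c) hr
    rw [intervalIntegrable_iff, uIoc_of_le hc] at h ⊢
    exact h.congr_fun (fun x hx => by rw [abs_of_pos hx.1]) measurableSet_Ioc
  have from_zero (c : ℝ) : IntervalIntegrable (fun x : ℝ => |x| ^ r) volume 0 c := by
    rcases le_total 0 c with hc | hc
    · exact from_zero_of_nonneg hc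
    · simpa only [abs_neg, neg_zero, neg_neg] using
        (IntervalIntegrable.iff_comp_neg (f := fun x : ℝ => |x| ^ r) (by simp)).mp
          (from_zero_of_nonneg (neg_nonneg.mpr hc))
  exact (from_zero a).symm.trans (from_zero b)

lemma integrableOn_Ioc_abs_rpow {r a b : ℝ} (hr : -1 < r) (hab : a ≤ b) :
    IntegrableOn (fun x : ℝ => |x| ^ r) (Ioc a b) := by
  simpa only [intervalIntegrable_iff, uIoc_of_le hab] using intervalIntegrable_abs_rpow hr a b

lemma setIntegral_Ioc_neg_abs_rpow {r a b : ℝ} (hab : a ≤ b) :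
    ∫ x in Ioc (-b) (-a), |x| ^ r = ∫ x in Ioc a b, |x| ^ r := by
  have h := intervalIntegral.integral_comp_neg (a := a) (b := b) (fun x : ℝ => |x| ^ r)
  simp only [abs_neg] at h
  rw [← intervalIntegral.integral_of_le hab, h,
    intervalIntegral.integral_of_le (neg_le_neg hab)]

lemma setIntegral_Ioc_zero_abs_rpow {r b : ℝ} (hr : -1 < r) (hb : 0 ≤ b) :
    ∫ x in Ioc 0 b, |x| ^ r = b ^ (r + 1) / (r + 1) := by
  rw [setIntegral_congr_fun measurableSet_Ioc (fun x hx => by rw [abs_of_pos hx.1]),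
    ← intervalIntegral.integral_of_le hb, integral_rpow (Or.inl hr),
    Real.zero_rpow (by linarith), sub_zero]

lemma setIntegral_Ioc_neg_self_abs_rpow {r b : ℝ} (hr : -1 < r) (hb : 0 ≤ b) :
    ∫ x in Ioc (-b) b, |x| ^ r = 2 * (b ^ (r + 1) / (r + 1)) := by
  have hb' : -b ≤ 0 := neg_nonpos.mpr hb
  rw [← Ioc_union_Ioc_eq_Ioc hb' hb,
    setIntegral_union (Ioc_disjoint_Ioc_of_le le_rfl) measurableSet_Ioc
      (integrableOn_Ioc_abs_rpow hr hb') (integrableOn_Ioc_abs_rpow hr hb)]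
  have h := setIntegral_Ioc_neg_abs_rpow (r := r) hb
  rw [neg_zero] at h
  rw [h, setIntegral_Ioc_zero_abs_rpow hr hb]
  ring

noncomputable def absRpowAvg (r a b : ℝ) : ℝ :=
  (b - a)⁻¹ * ∫ x in Ioc a b, |x| ^ r

lemma apExpr_eq (p δ a b : ℝ) :
    apExpr p δ a b = absRpowAvg ((p - 1) * (1 - δ)) a b * absRpowAvg (δ - 1) a b ^ (p - 1) :=
  rfl

lemma absRpowAvg_nonneg {r a b : ℝ} (hab : a ≤ b) : 0 ≤ absRpowAvg r a b :=
  mul_nonneg (inv_nonneg.mpr (sub_nonneg.mpr hab))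
    (setIntegral_nonneg measurableSet_Ioc fun x _ => Real.rpow_nonneg (abs_nonneg x) r)

lemma absRpowAvg_neg {r a b : ℝ} (hab : a ≤ b) : absRpowAvg r (-b) (-a) = absRpowAvg r a b := by
  rw [absRpowAvg, absRpowAvg, setIntegral_Ioc_neg_abs_rpow hab, neg_sub_neg]

lemma absRpowAvg_zero_one {r : ℝ} (hr : -1 < r) : absRpowAvg r 0 1 = (r + 1)⁻¹ := by
  rw [absRpowAvg, setIntegral_Ioc_zero_abs_rpow hr zero_le_one, Real.one_rpow]
  simp

/-- `(a, b]` lies in `(-b, b]` and has length at least `b / 2`. -/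
lemma absRpowAvg_le_of_lt_half {r a b : ℝ} (hr : -1 < r) (hb : 0 < b) (hba : -b ≤ a)
    (hab : a < b / 2) : absRpowAvg r a b ≤ 4 * b ^ r / (r + 1) := by
  have hr1 : 0 < r + 1 := by linarith
  have hlen : (b - a)⁻¹ ≤ 2 / b := by
    rw [← inv_div]; exact inv_anti₀ (by positivity) (by linarith)
  have hint : ∫ x in Ioc a b, |x| ^ r ≤ 2 * (b ^ (r + 1) / (r + 1)) := by
    rw [← setIntegral_Ioc_neg_self_abs_rpow hr hb.le]
    exact setIntegral_mono_set (integrableOn_Ioc_abs_rpow hr (by linarith))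
      (Filter.Eventually.of_forall fun x => Real.rpow_nonneg (abs_nonneg x) r)
      (Ioc_subset_Ioc_left hba).eventuallyLE
  calc absRpowAvg r a b ≤ 2 / b * (2 * (b ^ (r + 1) / (r + 1))) :=
        mul_le_mul hlen hint
          (setIntegral_nonneg measurableSet_Ioc fun x _ => Real.rpow_nonneg (abs_nonneg x) r)
          (by positivity)
    _ = 4 * b ^ r / (r + 1) := by
        rw [Real.rpow_add_one hb.ne']; field_simp; ring

lemma absRpowAvg_le_of_forall_le {r a b M : ℝ} (hab : a < b)
    (hM : ∀ x ∈ Ioc a b, |x| ^ r ≤ M) : absRpowAvg r a b ≤ M := by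
  have hint : ‖∫ x in Ioc a b, |x| ^ r‖ ≤ M * (b - a) := by
    rw [← Real.volume_real_Ioc_of_le hab.le]
    exact norm_setIntegral_le_of_norm_le_const measure_Ioc_lt_top fun x hx => by
      rw [Real.norm_of_nonneg (Real.rpow_nonneg (abs_nonneg x) r)]; exact hM x hx
  rw [absRpowAvg, inv_mul_le_iff₀ (sub_pos.mpr hab), mul_comm]
  exact (Real.le_norm_self _).trans hint

lemma rpow_mul_rpow_rpow_eq_one {t : ℝ} (ht : 0 < t) (p δ : ℝ) :
    t ^ ((p - 1) * (1 - δ)) * (t ^ (δ - 1)) ^ (p - 1) = 1 := by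
  rw [← Real.rpow_mul ht.le, ← Real.rpow_add ht,
    show (p - 1) * (1 - δ) + (δ - 1) * (p - 1) = 0 by ring, Real.rpow_zero]

lemma apExpr_neg {p δ a b : ℝ} (hab : a ≤ b) : apExpr p δ (-b) (-a) = apExpr p δ a b := by
  rw [apExpr_eq, apExpr_eq, absRpowAvg_neg hab, absRpowAvg_neg hab]

lemma apExpr_le_of_lt_half {p δ a b : ℝ} (hp : 1 < p) (hδ : 0 < δ) (hδ1 : δ ≤ 1) (hb : 0 < b)
    (hba : -b ≤ a) (hab : a < b / 2) : apExpr p δ a b ≤ 4 ^ p * δ ^ (-(p - 1)) := by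
  set α := (p - 1) * (1 - δ)
  have hα : 0 ≤ α := mul_nonneg (by linarith) (by linarith)
  have hw : absRpowAvg α a b ≤ 4 * b ^ α := by
    refine (absRpowAvg_le_of_lt_half (by linarith) hb hba hab).trans ?_
    exact div_le_self (by positivity) (by linarith)
  have hw' : absRpowAvg (δ - 1) a b ≤ 4 * b ^ (δ - 1) * δ⁻¹ := by
    simpa [div_eq_mul_inv] using absRpowAvg_le_of_lt_half (r := δ - 1) (by linarith) hb hba hab
  calc apExpr p δ a b ≤ 4 * b ^ α * (4 * b ^ (δ - 1) * δ⁻¹) ^ (p - 1) := by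
        have hnonneg : 0 ≤ absRpowAvg (δ - 1) a b := absRpowAvg_nonneg (by linarith)
        rw [apExpr_eq]
        exact mul_le_mul hw (Real.rpow_le_rpow hnonneg hw' (by linarith))
          (Real.rpow_nonneg hnonneg _) (by positivity)
    _ = 4 * 4 ^ (p - 1) * (b ^ α * (b ^ (δ - 1)) ^ (p - 1)) * δ ^ (-(p - 1)) := by
        rw [Real.mul_rpow (by positivity) (by positivity), Real.mul_rpow (by norm_num) (by positivity),
          Real.inv_rpow hδ.le, ← Real.rpow_neg hδ.le]
        ring
    _ = 4 ^ p * δ ^ (-(p - 1)) := by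
        rw [rpow_mul_rpow_rpow_eq_one hb, mul_one, ← Real.rpow_one_add' (by norm_num) (by linarith)]
        ring_nf

lemma apExpr_le_of_half_le {p δ a b : ℝ} (hp : 1 < p) (hδ : 0 ≤ δ) (hδ1 : δ ≤ 1) (ha : 0 < a)
    (hab : a < b) (hb : b ≤ 2 * a) : apExpr p δ a b ≤ 2 ^ (p - 1) := by
  set α := (p - 1) * (1 - δ)
  have hα : 0 ≤ α := mul_nonneg (by linarith) (by linarith)
  have pos_of_mem {x : ℝ} (hx : x ∈ Ioc a b) : 0 < x := ha.trans hx.1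
  have hw : absRpowAvg α a b ≤ b ^ α :=
    absRpowAvg_le_of_forall_le hab fun x hx => by
      rw [abs_of_pos (pos_of_mem hx)]; exact Real.rpow_le_rpow (pos_of_mem hx).le hx.2 hα
  have hw' : absRpowAvg (δ - 1) a b ≤ a ^ (δ - 1) :=
    absRpowAvg_le_of_forall_le hab fun x hx => by
      rw [abs_of_pos (pos_of_mem hx)]
      exact Real.rpow_le_rpow_of_nonpos ha hx.1.le (by linarith)
  have hnonneg : 0 ≤ absRpowAvg (δ - 1) a b := absRpowAvg_nonneg hab.le
  calc apExpr p δ a b ≤ (2 * a) ^ α * (a ^ (δ - 1)) ^ (p - 1) := by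
        rw [apExpr_eq]
        exact mul_le_mul (hw.trans (Real.rpow_le_rpow (by linarith) hb hα))
          (Real.rpow_le_rpow hnonneg hw' (by linarith)) (Real.rpow_nonneg hnonneg _)
          (by positivity)
    _ = 2 ^ α := by
        rw [Real.mul_rpow zero_le_two ha.le, mul_assoc, rpow_mul_rpow_rpow_eq_one ha, mul_one]
    _ ≤ 2 ^ (p - 1) :=
        Real.rpow_le_rpow_of_exponent_le one_le_two (mul_le_of_le_one_right (by linarith) (by linarith))

lemma apExpr_le {p δ a b : ℝ} (hp : 1 < p) (hδ : 0 < δ) (hδ1 : δ ≤ 1) (hab : a < b) :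
    apExpr p δ a b ≤ 4 ^ p * δ ^ (-(p - 1)) := by
  wlog hcenter : 0 ≤ a + b generalizing a b
  · rw [← apExpr_neg hab.le]
    exact this (neg_lt_neg hab) (by linarith)
  rcases lt_or_ge a (b / 2) with hnear | hfar
  · exact apExpr_le_of_lt_half hp hδ hδ1 (by linarith) (by linarith) hnear
  · have hδpow : 1 ≤ δ ^ (-(p - 1)) :=
      Real.one_le_rpow_of_pos_of_le_one_of_nonpos hδ hδ1 (by linarith)
    calc apExpr p δ a b ≤ 2 ^ (p - 1) :=
          apExpr_le_of_half_le hp hδ.le hδ1 (by linarith) hab (by linarith)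
      _ ≤ 4 ^ p := (Real.rpow_le_rpow zero_le_two (by norm_num) (by linarith)).trans
          (Real.rpow_le_rpow_of_exponent_le (by norm_num) (by linarith))
      _ ≤ 4 ^ p * δ ^ (-(p - 1)) := le_mul_of_one_le_right (by positivity) hδpow

lemma apExpr_zero_one {p δ : ℝ} (hp : 1 ≤ p) (hδ : 0 < δ) (hδ1 : δ ≤ 1) :
    apExpr p δ 0 1 = ((p - 1) * (1 - δ) + 1)⁻¹ * δ ^ (-(p - 1)) := by
  rw [apExpr_eq, absRpowAvg_zero_one (by nlinarith), absRpowAvg_zero_one (by linarith),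
    sub_add_cancel, Real.inv_rpow hδ.le, Real.rpow_neg hδ.le]

/-- The power weight `|x|^((p-1)(1-δ))` is an `A_p` weight on `ℝ` with
`[w]_{A_p} ≈ δ^{-(p-1)}`. -/
theorem power_weight_Ap (p : ℝ) (hp : 1 < p) :
    ∃ c > 0, ∃ C > 0, ∀ δ ∈ Set.Ioo (0:ℝ) (1/2),
      (∀ a b : ℝ, a < b → apExpr p δ a b ≤ C * δ ^ (-(p - 1))) ∧
      ∃ a b : ℝ, a < b ∧ c * δ ^ (-(p - 1)) ≤ apExpr p δ a b := by
  refine ⟨p⁻¹, by positivity, 4 ^ p, by positivity, fun δ ⟨hδ, hδ2⟩ => ⟨?_, 0, 1, one_pos, ?_⟩⟩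
  · exact fun a b hab => apExpr_le hp hδ (by linarith) hab
  · rw [apExpr_zero_one hp.le hδ (by linarith)]
    have hexp_pos : 0 < (p - 1) * (1 - δ) + 1 := by nlinarith
    exact mul_le_mul_of_nonneg_right (inv_anti₀ hexp_pos (by nlinarith)) (by positivity)
end
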